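/- There exists a constant C>0 with the following property. Let f:ℝ₊→ℝ satisfy: (i) ∫₀^∞ f(x) dm_λ(x) = 0; (ii) there exist x₁,x₂,r ∈ ℝ₊ and D₁,D₂ > 0 with |f(x)| ≤ D₁·1_{I(x₁,r)}(x) + D₂·1_{I(x₂,r)}(x) for all x; (iii) |x₁−x₂| ≥ 4r. Then there exist finitely many (1,∞)_{Δ_λ}-atoms a₁,…,a_N and real numbers α₁,…,α_N such that f = Σ_{j=1}^N α_j a_j pointwise almost everywhere and Σ_{j=1}^N |α_j| ≤ C · log₂(|x₁−x₂|/r) · [ D₁·m_λ(I(x₁,r)) + D₂·m_λ(I(x₂,r)) ], with C independent of x₁, x₂, r, D₁, D₂ and f. -/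

import Mathlib

/-!
Split `f` into its restrictions `f₁, f₂` to `I₁ = I(x₁, r)` and `I₂ = I(x₂, r)`. Subtracting from
each its mean, as a multiple of the normalized indicator `φᵢ = 1_{Iᵢ} / m_λ(Iᵢ)`, leaves two atoms;
the means `s` and `-s` cancel, so what remains is `s (φ₁ - φ₂)`. As `m_λ` is doubling,
`φ(I(x, ρ)) - φ(I(x, 2ρ))` is a bounded multiple of an atom supported in `I(x, 2ρ)`. Climbing from
`I(x₁, r)` to `I(x₁, 2ᴷ r)` with `2ᴷ r ≈ |x₁ - x₂|`, crossing over to `I(x₂, 2ᴷ r)` and descending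
to `I(x₂, r)` therefore costs `O(K) = O(log₂(|x₁ - x₂| / r))`, while `|s| ≤ D₁ m_λ(I₁)`.
-/

open MeasureTheory Real Set Filter

/-- The measure `dm_λ(x) = x^{2λ} dx` on `ℝ₊ = (0,∞)`. -/
noncomputable def mlam (lam : ℝ) : Measure ℝ :=
  (volume.restrict (Set.Ioi (0:ℝ))).withDensity (fun x => ENNReal.ofReal (x ^ (2*lam)))

/-- The interval `I(x,r) = (x-r, x+r) ∩ ℝ₊`. -/
def Ilam (x r : ℝ) : Set ℝ := Set.Ioo (x - r) (x + r) ∩ Set.Ioi 0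

/-- A `(1,∞)_{Δ_λ}`-atom: a measurable function supported in a bounded open interval
`I ⊂ ℝ₊`, with `‖a‖_∞ ≤ m_λ(I)⁻¹` and `∫ a dm_λ = 0`. -/
def IsDeltaAtom (lam : ℝ) (a : ℝ → ℝ) : Prop :=
  Measurable a ∧
  ∃ u v : ℝ, 0 ≤ u ∧ u < v ∧
    (∀ x, x ∉ Set.Ioo u v → a x = 0) ∧
    (∀ᵐ x ∂(mlam lam), |a x| ≤ ((mlam lam (Set.Ioo u v)).toReal)⁻¹) ∧
    ∫ x, a x ∂(mlam lam) = 0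

lemma Ilam_eq_Ioo (x r : ℝ) : Ilam x r = Ioo (max (x - r) 0) (x + r) := by
  ext t
  simp only [Ilam, mem_inter_iff, mem_Ioo, mem_Ioi, max_lt_iff]
  tauto

lemma measurableSet_Ilam (x r : ℝ) : MeasurableSet (Ilam x r) :=
  measurableSet_Ioo.inter measurableSet_Ioi

lemma Ilam_subset_Ilam {x r y R : ℝ} (h₁ : y - R ≤ x - r) (h₂ : x + r ≤ y + R) :
    Ilam x r ⊆ Ilam y R :=
  inter_subset_inter_left _ (Ioo_subset_Ioo h₁ h₂)

lemma disjoint_Ilam {x₁ x₂ r : ℝ} (h : 2 * r ≤ |x₁ - x₂|) : Disjoint (Ilam x₁ r) (Ilam x₂ r) := by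
  refine disjoint_left.2 fun t ⟨⟨h₁, h₂⟩, _⟩ ⟨⟨h₃, h₄⟩, _⟩ => ?_
  cases abs_cases (x₁ - x₂) <;> linarith

section Measure

variable {lam : ℝ}

lemma mlam_apply {s : Set ℝ} (hs : MeasurableSet s) :
    mlam lam s = ∫⁻ x in s ∩ Ioi 0, ENNReal.ofReal (x ^ (2 * lam)) := by
  rw [mlam, withDensity_apply _ hs, Measure.restrict_restrict hs]

lemma mlam_Ioo_le_ofReal (hlam : 0 ≤ lam) (u : ℝ) {v : ℝ} (hv : 0 ≤ v) :
    mlam lam (Ioo u v) ≤ ENNReal.ofReal (v ^ (2 * lam) * (v - u)) := by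
  rw [mlam_apply measurableSet_Ioo,
    ENNReal.ofReal_mul (rpow_nonneg hv _), ← Real.volume_Ioo, ← setLIntegral_const]
  calc ∫⁻ x in Ioo u v ∩ Ioi 0, ENNReal.ofReal (x ^ (2 * lam))
      ≤ ∫⁻ _ in Ioo u v ∩ Ioi 0, ENNReal.ofReal (v ^ (2 * lam)) :=
        setLIntegral_mono measurable_const fun x hx =>
          ENNReal.ofReal_le_ofReal (rpow_le_rpow hx.2.le hx.1.2.le (by linarith))
    _ ≤ ∫⁻ _ in Ioo u v, ENNReal.ofReal (v ^ (2 * lam)) := lintegral_mono_set inter_subset_left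

lemma ofReal_le_mlam_Ioo (hlam : 0 ≤ lam) {u c : ℝ} (v : ℝ) (hc : 0 ≤ c) (huc : u ≤ c) :
    ENNReal.ofReal (c ^ (2 * lam) * (v - c)) ≤ mlam lam (Ioo u v) := by
  rw [mlam_apply measurableSet_Ioo,
    ENNReal.ofReal_mul (rpow_nonneg hc _), ← Real.volume_Ioo, ← setLIntegral_const]
  calc ∫⁻ _ in Ioo c v, ENNReal.ofReal (c ^ (2 * lam))
      ≤ ∫⁻ x in Ioo c v, ENNReal.ofReal (x ^ (2 * lam)) :=
        setLIntegral_mono (by fun_prop) fun x hx =>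
          ENNReal.ofReal_le_ofReal (rpow_le_rpow hc hx.1.le (by linarith))
    _ ≤ _ := lintegral_mono_set fun x (hx : x ∈ Ioo c v) =>
        (⟨⟨huc.trans_lt hx.1, hx.2⟩, hc.trans_lt hx.1⟩ : x ∈ Ioo u v ∩ Ioi 0)

lemma mlam_Ioo_ne_top (hlam : 0 ≤ lam) (u : ℝ) {v : ℝ} (hv : 0 ≤ v) : mlam lam (Ioo u v) ≠ ⊤ :=
  ne_top_of_le_ne_top ENNReal.ofReal_ne_top (mlam_Ioo_le_ofReal hlam u hv)

lemma mlam_Ilam_ne_top (hlam : 0 ≤ lam) {x r : ℝ} (hx : 0 ≤ x) (hr : 0 ≤ r) :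
    mlam lam (Ilam x r) ≠ ⊤ :=
  ne_top_of_le_ne_top (mlam_Ioo_ne_top hlam (x - r) (by linarith)) (measure_mono inter_subset_left)

lemma mlam_Ioo_toReal_pos (hlam : 0 ≤ lam) {u v : ℝ} (hu : 0 ≤ u) (huv : u < v) :
    0 < (mlam lam (Ioo u v)).toReal := by
  have hc : 0 < (u + v) / 2 := by linarith
  refine ENNReal.toReal_pos (ne_of_gt ?_) (mlam_Ioo_ne_top hlam u (by linarith))
  refine lt_of_lt_of_le ?_ (ofReal_le_mlam_Ioo hlam v hc.le (by linarith : u ≤ (u + v) / 2))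
  exact ENNReal.ofReal_pos.2 (mul_pos (rpow_pos_of_pos hc _) (by linarith))

lemma mlam_Ilam_toReal_pos (hlam : 0 ≤ lam) {x r : ℝ} (hx : 0 ≤ x) (hr : 0 < r) :
    0 < (mlam lam (Ilam x r)).toReal := by
  rw [Ilam_eq_Ioo]
  exact mlam_Ioo_toReal_pos hlam (le_max_right _ _) (max_lt (by linarith) (by linarith))

noncomputable def mlamDoublingConst (lam : ℝ) : ℝ := 8 * 4 ^ (2 * lam)

lemma one_le_mlamDoublingConst (hlam : 0 ≤ lam) : 1 ≤ mlamDoublingConst lam := by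
  have : 1 ≤ (4 : ℝ) ^ (2 * lam) := one_le_rpow (by norm_num) (by linarith)
  unfold mlamDoublingConst
  linarith

/-- Comparing both measures with the density at `x + r / 2`, which is at least a quarter of
`x + 2 r`, gives the doubling constant `8 · 4 ^ (2 λ)`. -/
lemma mlam_Ilam_two_mul_le (hlam : 0 ≤ lam) {x r : ℝ} (hx : 0 ≤ x) (hr : 0 ≤ r) :
    (mlam lam (Ilam x (2 * r))).toReal ≤ mlamDoublingConst lam * (mlam lam (Ilam x r)).toReal := by
  have hc : 0 ≤ x + r / 2 := by linarith
  have hupper : (mlam lam (Ilam x (2 * r))).toReal ≤ (x + 2 * r) ^ (2 * lam) * (4 * r) := by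
    refine ENNReal.toReal_le_of_le_ofReal (by positivity)
      ((measure_mono inter_subset_left).trans ?_)
    have h := mlam_Ioo_le_ofReal hlam (x - 2 * r) (v := x + 2 * r) (by linarith)
    rwa [show x + 2 * r - (x - 2 * r) = 4 * r by ring] at h
  have hlower : (x + r / 2) ^ (2 * lam) * (r / 2) ≤ (mlam lam (Ilam x r)).toReal := by
    rw [Ilam_eq_Ioo, ← ENNReal.ofReal_le_iff_le_toReal (mlam_Ioo_ne_top hlam _ (by linarith))]
    have h := ofReal_le_mlam_Ioo hlam (x + r) hc (max_le (by linarith) hc : max (x - r) 0 ≤ _)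
    rwa [show x + r - (x + r / 2) = r / 2 by ring] at h
  have hdensity : (x + 2 * r) ^ (2 * lam) ≤ 4 ^ (2 * lam) * (x + r / 2) ^ (2 * lam) := by
    rw [← mul_rpow (by norm_num) hc]
    exact rpow_le_rpow (by linarith) (by linarith) (by linarith)
  calc (mlam lam (Ilam x (2 * r))).toReal ≤ (x + 2 * r) ^ (2 * lam) * (4 * r) := hupper
    _ ≤ 4 ^ (2 * lam) * (x + r / 2) ^ (2 * lam) * (4 * r) := by gcongr
    _ = mlamDoublingConst lam * ((x + r / 2) ^ (2 * lam) * (r / 2)) := by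
      unfold mlamDoublingConst; ring
    _ ≤ _ := by unfold mlamDoublingConst; gcongr

end Measure

section NormalizedIndicator

variable {α : Type*} [MeasurableSpace α] {μ : Measure α} {s : Set α}

noncomputable def normalizedIndicator (μ : Measure α) (s : Set α) : α → ℝ :=
  s.indicator fun _ => (μ s).toReal⁻¹

lemma measurable_normalizedIndicator (hs : MeasurableSet s) :
    Measurable (normalizedIndicator μ s) :=
  measurable_const.indicator hs

lemma abs_normalizedIndicator_le (x : α) :
    |normalizedIndicator μ s x| ≤ (μ s).toReal⁻¹ := by
  unfold normalizedIndicator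
  by_cases hx : x ∈ s
  · rw [indicator_of_mem hx, abs_of_nonneg (by positivity)]
  · rw [indicator_of_notMem hx, abs_zero]
    positivity

lemma normalizedIndicator_of_notMem {x : α} (hx : x ∉ s) : normalizedIndicator μ s x = 0 :=
  indicator_of_notMem hx _

lemma integrable_normalizedIndicator (hs : MeasurableSet s) (hμs : μ s ≠ ⊤) :
    Integrable (normalizedIndicator μ s) μ :=
  (integrable_indicator_iff hs).2 (integrableOn_const hμs)

lemma integral_normalizedIndicator (hs : MeasurableSet s) (hμs : (μ s).toReal ≠ 0) :
    ∫ x, normalizedIndicator μ s x ∂μ = 1 := by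
  rw [normalizedIndicator, integral_indicator_const _ hs, measureReal_def, smul_eq_mul,
    mul_inv_cancel₀ hμs]

lemma integrable_of_abs_le_of_support_subset {g : α → ℝ} {D : ℝ} (hg : Measurable g)
    (hμs : μ s ≠ ⊤) (hsupp : ∀ x ∉ s, g x = 0) (hbd : ∀ x, |g x| ≤ D) : Integrable g μ :=
  (integrableOn_iff_integrable_of_support_subset fun x hx => by_contra fun h => hx (hsupp x h)).1
    (Measure.integrableOn_of_bounded hμs hg.aestronglyMeasurable
      (Eventually.of_forall fun x => (hbd x).trans_eq' (Real.norm_eq_abs _)))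

lemma abs_integral_le_of_support_subset {g : α → ℝ} {D : ℝ} (hμs : μ s ≠ ⊤)
    (hsupp : ∀ x ∉ s, g x = 0) (hbd : ∀ x, |g x| ≤ D) :
    |∫ x, g x ∂μ| ≤ D * (μ s).toReal := by
  rw [← setIntegral_eq_integral_of_forall_compl_eq_zero hsupp, ← Real.norm_eq_abs]
  exact norm_setIntegral_le_of_norm_le_const hμs.lt_top fun x _ => hbd x

end NormalizedIndicator

def HasAtomicDecomp (lam : ℝ) (f : ℝ → ℝ) (A : ℝ) : Prop :=
  ∃ (ι : Type) (_ : Fintype ι) (c : ι → ℝ) (a : ι → ℝ → ℝ),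
    (∀ i, IsDeltaAtom lam (a i)) ∧ (f =ᵐ[mlam lam] fun x => ∑ i, c i * a i x) ∧
      ∑ i, |c i| ≤ A

namespace HasAtomicDecomp

variable {lam A B : ℝ} {f g : ℝ → ℝ}

lemma mono (h : HasAtomicDecomp lam f A) (hAB : A ≤ B) : HasAtomicDecomp lam f B :=
  let ⟨ι, _, c, a, ha, hf, hc⟩ := h
  ⟨ι, _, c, a, ha, hf, hc.trans hAB⟩

lemma congr (h : HasAtomicDecomp lam g A) (hfg : f =ᵐ[mlam lam] g) : HasAtomicDecomp lam f A :=
  let ⟨ι, _, c, a, ha, hg, hc⟩ := h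
  ⟨ι, _, c, a, ha, hfg.trans hg, hc⟩

lemma zero : HasAtomicDecomp lam 0 0 :=
  ⟨Empty, inferInstance, fun _ => 0, fun _ => 0, nofun, by simp [EventuallyEq], by simp⟩

lemma add (hf : HasAtomicDecomp lam f A) (hg : HasAtomicDecomp lam g B) :
    HasAtomicDecomp lam (f + g) (A + B) := by
  obtain ⟨ι, _, c, a, ha, hf, hc⟩ := hf
  obtain ⟨κ, _, d, b, hb, hg, hd⟩ := hg
  refine ⟨ι ⊕ κ, inferInstance, Sum.elim c d, Sum.elim a b, ?_, ?_, ?_⟩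
  · rintro (i | i)
    exacts [ha i, hb i]
  · filter_upwards [hf, hg] with x hfx hgx
    simp [Fintype.sum_sum_type, hfx, hgx]
  · simpa [Fintype.sum_sum_type] using add_le_add hc hd

lemma const_mul (h : HasAtomicDecomp lam f A) (t : ℝ) :
    HasAtomicDecomp lam (fun x => t * f x) (|t| * A) := by
  obtain ⟨ι, _, c, a, ha, hf, hc⟩ := h
  refine ⟨ι, inferInstance, fun i => t * c i, a, ha, ?_, ?_⟩
  · filter_upwards [hf] with x hfx
    simp [hfx, Finset.mul_sum, mul_assoc]
  · simpa [abs_mul, ← Finset.mul_sum] using mul_le_mul_of_nonneg_left hc (abs_nonneg t)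

lemma sub (hf : HasAtomicDecomp lam f A) (hg : HasAtomicDecomp lam g B) :
    HasAtomicDecomp lam (f - g) (A + B) := by
  refine ((hf.add (hg.const_mul (-1))).congr (.of_forall fun x => ?_)).mono (by simp)
  simp [sub_eq_add_neg]

lemma exists_sum_range (h : HasAtomicDecomp lam f A) :
    ∃ (N : ℕ) (α : ℕ → ℝ) (a : ℕ → ℝ → ℝ),
      (∀ j < N, IsDeltaAtom lam (a j)) ∧
      (∀ᵐ x ∂(mlam lam), f x = ∑ j ∈ Finset.range N, α j * a j x) ∧
      ∑ j ∈ Finset.range N, |α j| ≤ A := by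
  obtain ⟨ι, _, c, a, ha, hf, hc⟩ := h
  let e := (Fintype.equivFin ι).symm
  refine ⟨Fintype.card ι, fun j => if hj : j < Fintype.card ι then c (e ⟨j, hj⟩) else 0,
    fun j => if hj : j < Fintype.card ι then a (e ⟨j, hj⟩) else 0,
    fun j hj => by simpa [hj] using ha _, ?_, ?_⟩
  · filter_upwards [hf] with x hfx
    rw [hfx, Finset.sum_range, ← e.sum_comp]
    simp
  · rw [← e.sum_comp] at hc
    rw [Finset.sum_range]
    simpa using hc

end HasAtomicDecomp

section Atoms

variable {lam : ℝ}

lemma hasAtomicDecomp_of_support_Ilam (hlam : 0 ≤ lam) {g : ℝ → ℝ} {x r M : ℝ} (hx : 0 ≤ x)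
    (hr : 0 < r) (hM : 0 < M) (hg : Measurable g) (hsupp : ∀ y ∉ Ilam x r, g y = 0)
    (hbd : ∀ y, |g y| ≤ M) (hint : ∫ y, g y ∂mlam lam = 0) :
    HasAtomicDecomp lam g (M * (mlam lam (Ilam x r)).toReal) := by
  have hm : 0 < (mlam lam (Ilam x r)).toReal := mlam_Ilam_toReal_pos hlam hx hr
  have hMm : 0 < M * (mlam lam (Ilam x r)).toReal := mul_pos hM hm
  refine ⟨Unit, inferInstance, fun _ => M * (mlam lam (Ilam x r)).toReal,
    fun _ y => (M * (mlam lam (Ilam x r)).toReal)⁻¹ * g y, fun _ => ?_,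
    .of_forall fun y => by simp only [Fintype.sum_unique]; rw [mul_inv_cancel_left₀ hMm.ne'],
    by simp [abs_of_pos hMm]⟩
  refine ⟨measurable_const.mul hg, max (x - r) 0, x + r, le_max_right _ _,
    max_lt (by linarith) (by linarith), fun y hy => ?_, .of_forall fun y => ?_, ?_⟩
  · beta_reduce
    rw [hsupp y (by rwa [Ilam_eq_Ioo]), mul_zero]
  · rw [← Ilam_eq_Ioo, abs_mul, abs_of_pos (inv_pos.2 hMm)]
    calc (M * (mlam lam (Ilam x r)).toReal)⁻¹ * |g y|
        ≤ (M * (mlam lam (Ilam x r)).toReal)⁻¹ * M := by gcongr; exact hbd y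
      _ = (mlam lam (Ilam x r)).toReal⁻¹ := by field_simp
  · rw [integral_const_mul, hint, mul_zero]

lemma hasAtomicDecomp_sub_integral_mul_normalizedIndicator (hlam : 0 ≤ lam) {g : ℝ → ℝ}
    {x r D : ℝ} (hx : 0 ≤ x) (hr : 0 < r) (hD : 0 < D) (hg : Measurable g)
    (hsupp : ∀ y ∉ Ilam x r, g y = 0) (hbd : ∀ y, |g y| ≤ D) :
    HasAtomicDecomp lam
      (fun y => g y - (∫ z, g z ∂mlam lam) * normalizedIndicator (mlam lam) (Ilam x r) y)
      (2 * D * (mlam lam (Ilam x r)).toReal) := by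
  have hm : 0 < (mlam lam (Ilam x r)).toReal := mlam_Ilam_toReal_pos hlam hx hr
  have htop : mlam lam (Ilam x r) ≠ ⊤ := mlam_Ilam_ne_top hlam hx hr.le
  have hmean : |∫ z, g z ∂mlam lam| ≤ D * (mlam lam (Ilam x r)).toReal :=
    abs_integral_le_of_support_subset htop hsupp hbd
  refine hasAtomicDecomp_of_support_Ilam hlam hx hr (by positivity)
    (hg.sub (measurable_const.mul (measurable_normalizedIndicator (measurableSet_Ilam x r))))
    (fun y hy => by rw [hsupp y hy, normalizedIndicator_of_notMem hy, mul_zero, sub_zero])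
    (fun y => ?_) ?_
  · calc |g y - (∫ z, g z ∂mlam lam) * normalizedIndicator (mlam lam) (Ilam x r) y|
        ≤ |g y| + |∫ z, g z ∂mlam lam| * |normalizedIndicator (mlam lam) (Ilam x r) y| := by
          rw [← abs_mul]; exact abs_sub _ _
      _ ≤ D + D * (mlam lam (Ilam x r)).toReal * (mlam lam (Ilam x r)).toReal⁻¹ := by
          gcongr
          exacts [hbd y, abs_normalizedIndicator_le y]
      _ = 2 * D := by field_simp; ring
  · rw [integral_sub (integrable_of_abs_le_of_support_subset hg htop hsupp hbd)
      ((integrable_normalizedIndicator (measurableSet_Ilam x r) htop).const_mul _),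
      integral_const_mul, integral_normalizedIndicator (measurableSet_Ilam x r) hm.ne', mul_one,
      sub_self]

lemma hasAtomicDecomp_normalizedIndicator_sub (hlam : 0 ≤ lam) {s s' : Set ℝ} {x r A B : ℝ}
    (hx : 0 ≤ x) (hr : 0 < r) (hs : MeasurableSet s) (hs' : MeasurableSet s')
    (hsI : s ⊆ Ilam x r) (hs'I : s' ⊆ Ilam x r)
    (hA : (mlam lam (Ilam x r)).toReal ≤ A * (mlam lam s).toReal)
    (hB : (mlam lam (Ilam x r)).toReal ≤ B * (mlam lam s').toReal) :
    HasAtomicDecomp lam (normalizedIndicator (mlam lam) s - normalizedIndicator (mlam lam) s')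
      (A + B) := by
  have hm : 0 < (mlam lam (Ilam x r)).toReal := mlam_Ilam_toReal_pos hlam hx hr
  have htop : mlam lam (Ilam x r) ≠ ⊤ := mlam_Ilam_ne_top hlam hx hr.le
  have hpos {t : Set ℝ} {C : ℝ} (h : (mlam lam (Ilam x r)).toReal ≤ C * (mlam lam t).toReal) :
      0 < (mlam lam t).toReal :=
    ENNReal.toReal_nonneg.lt_of_ne fun h₀ => by rw [← h₀, mul_zero] at h; linarith
  have hms := hpos hA
  have hms' := hpos hB
  refine (hasAtomicDecomp_of_support_Ilam hlam hx hr (M := (mlam lam s).toReal⁻¹ +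
      (mlam lam s').toReal⁻¹) (by positivity)
    ((measurable_normalizedIndicator hs).sub (measurable_normalizedIndicator hs'))
    (fun y hy => by
      simp [normalizedIndicator_of_notMem (fun h => hy (hsI h)),
        normalizedIndicator_of_notMem (fun h => hy (hs'I h))])
    (fun y => (abs_sub _ _).trans (add_le_add (abs_normalizedIndicator_le y)
      (abs_normalizedIndicator_le y))) ?_).mono ?_
  · rw [Pi.sub_def, integral_sub
      (integrable_normalizedIndicator hs (ne_top_of_le_ne_top htop (measure_mono hsI)))
      (integrable_normalizedIndicator hs' (ne_top_of_le_ne_top htop (measure_mono hs'I))),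
      integral_normalizedIndicator hs hms.ne', integral_normalizedIndicator hs' hms'.ne', sub_self]
  · rw [add_mul]
    exact add_le_add ((inv_mul_le_iff₀ hms).2 (by linarith))
      ((inv_mul_le_iff₀ hms').2 (by linarith))

end Atoms

section Chains

variable {lam : ℝ}

lemma hasAtomicDecomp_normalizedIndicator_Ilam_sub_two_mul (hlam : 0 ≤ lam) {x r : ℝ}
    (hx : 0 ≤ x) (hr : 0 < r) :
    HasAtomicDecomp lam (normalizedIndicator (mlam lam) (Ilam x r) -
      normalizedIndicator (mlam lam) (Ilam x (2 * r))) (mlamDoublingConst lam + 1) :=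
  hasAtomicDecomp_normalizedIndicator_sub hlam hx (by positivity) (measurableSet_Ilam x r)
    (measurableSet_Ilam x (2 * r)) (Ilam_subset_Ilam (by linarith) (by linarith)) subset_rfl
    (mlam_Ilam_two_mul_le hlam hx hr.le) (one_mul _).ge

lemma hasAtomicDecomp_normalizedIndicator_Ilam_sub_pow_mul (hlam : 0 ≤ lam) {x r : ℝ}
    (hx : 0 ≤ x) (hr : 0 < r) (K : ℕ) :
    HasAtomicDecomp lam (normalizedIndicator (mlam lam) (Ilam x r) -
      normalizedIndicator (mlam lam) (Ilam x (2 ^ K * r))) (K * (mlamDoublingConst lam + 1)) := by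
  induction K with
  | zero => simpa using HasAtomicDecomp.zero
  | succ K ih =>
    refine (ih.add (hasAtomicDecomp_normalizedIndicator_Ilam_sub_two_mul hlam hx
      (by positivity : 0 < 2 ^ K * r))).congr (.of_forall fun y => ?_) |>.mono
      (by push_cast; linarith)
    rw [show (2 : ℝ) ^ (K + 1) * r = 2 * (2 ^ K * r) by ring]
    simp only [Pi.sub_apply, Pi.add_apply]
    ring

lemma hasAtomicDecomp_normalizedIndicator_Ilam_sub_of_abs_le (hlam : 0 ≤ lam) {x₁ x₂ r : ℝ}
    (hx₁ : 0 ≤ x₁) (hx₂ : 0 ≤ x₂) (hr : 0 < r) (h : |x₁ - x₂| ≤ r) :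
    HasAtomicDecomp lam (normalizedIndicator (mlam lam) (Ilam x₁ r) -
      normalizedIndicator (mlam lam) (Ilam x₂ r))
      (mlamDoublingConst lam + mlamDoublingConst lam ^ 2) := by
  have h₁ := neg_abs_le (x₁ - x₂)
  have h₂ := le_abs_self (x₁ - x₂)
  refine hasAtomicDecomp_normalizedIndicator_sub hlam hx₁ (by positivity) (measurableSet_Ilam _ _)
    (measurableSet_Ilam _ _) (Ilam_subset_Ilam (by linarith) (by linarith))
    (Ilam_subset_Ilam (by linarith) (by linarith)) (mlam_Ilam_two_mul_le hlam hx₁ hr.le) ?_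
  calc (mlam lam (Ilam x₁ (2 * r))).toReal ≤ (mlam lam (Ilam x₂ (2 * (2 * r)))).toReal :=
        ENNReal.toReal_mono (mlam_Ilam_ne_top hlam hx₂ (by positivity))
          (measure_mono (Ilam_subset_Ilam (by linarith) (by linarith)))
    _ ≤ mlamDoublingConst lam * (mlam lam (Ilam x₂ (2 * r))).toReal :=
        mlam_Ilam_two_mul_le hlam hx₂ (by positivity)
    _ ≤ mlamDoublingConst lam * (mlamDoublingConst lam * (mlam lam (Ilam x₂ r)).toReal) :=
        mul_le_mul_of_nonneg_left (mlam_Ilam_two_mul_le hlam hx₂ hr.le)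
          (zero_le_one.trans (one_le_mlamDoublingConst hlam))
    _ = mlamDoublingConst lam ^ 2 * (mlam lam (Ilam x₂ r)).toReal := by ring

lemma hasAtomicDecomp_normalizedIndicator_Ilam_sub_of_abs_le_pow_mul (hlam : 0 ≤ lam)
    {x₁ x₂ r : ℝ} (hx₁ : 0 ≤ x₁) (hx₂ : 0 ≤ x₂) (hr : 0 < r) {K : ℕ}
    (h : |x₁ - x₂| ≤ 2 ^ K * r) :
    HasAtomicDecomp lam (normalizedIndicator (mlam lam) (Ilam x₁ r) -
      normalizedIndicator (mlam lam) (Ilam x₂ r))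
      (2 * K * (mlamDoublingConst lam + 1) +
        (mlamDoublingConst lam + mlamDoublingConst lam ^ 2)) := by
  refine (((hasAtomicDecomp_normalizedIndicator_Ilam_sub_pow_mul hlam hx₁ hr K).sub
    (hasAtomicDecomp_normalizedIndicator_Ilam_sub_pow_mul hlam hx₂ hr K)).add
    (hasAtomicDecomp_normalizedIndicator_Ilam_sub_of_abs_le hlam hx₁ hx₂ (by positivity) h)).congr
    (.of_forall fun y => ?_) |>.mono (by linarith)
  simp only [Pi.sub_apply, Pi.add_apply]
  ring

end Chains

section TwoBumps

variable {s₁ s₂ : Set ℝ} {f : ℝ → ℝ} {D₁ D₂ : ℝ}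

lemma eq_indicator_add_indicator_of_abs_le (hdisj : Disjoint s₁ s₂)
    (hf : ∀ x, |f x| ≤ D₁ * s₁.indicator 1 x + D₂ * s₂.indicator 1 x) (x : ℝ) :
    f x = s₁.indicator f x + s₂.indicator f x := by
  have hsupp : Function.support f ⊆ s₁ ∪ s₂ := fun y hy => by
    by_contra hy'
    simp only [mem_union, not_or] at hy'
    have := hf y
    rw [indicator_of_notMem hy'.1, indicator_of_notMem hy'.2, mul_zero, mul_zero,
      add_zero] at this
    exact hy (abs_nonpos_iff.1 this)
  rw [← congrFun (indicator_union_of_disjoint hdisj f) x, indicator_eq_self.2 hsupp]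

lemma abs_indicator_le_of_abs_le (hdisj : Disjoint s₁ s₂) (hD₁ : 0 ≤ D₁)
    (hf : ∀ x, |f x| ≤ D₁ * s₁.indicator 1 x + D₂ * s₂.indicator 1 x) (x : ℝ) :
    |s₁.indicator f x| ≤ D₁ := by
  by_cases hx : x ∈ s₁
  · simpa [indicator_of_mem hx, indicator_of_notMem (hdisj.notMem_of_mem_left hx)] using hf x
  · simpa [indicator_of_notMem hx] using hD₁

end TwoBumps

theorem hasAtomicDecomp_of_abs_le_two_bumps {lam : ℝ} (hlam : 0 ≤ lam) {f : ℝ → ℝ}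
    {x₁ x₂ r D₁ D₂ : ℝ} {K : ℕ} (hf : Measurable f) (hx₁ : 0 ≤ x₁) (hx₂ : 0 ≤ x₂) (hr : 0 < r)
    (hD₁ : 0 < D₁) (hD₂ : 0 < D₂) (hint : ∫ x, f x ∂mlam lam = 0)
    (hbound : ∀ x, |f x| ≤ D₁ * (Ilam x₁ r).indicator 1 x + D₂ * (Ilam x₂ r).indicator 1 x)
    (hsep : 2 * r ≤ |x₁ - x₂|) (hK : |x₁ - x₂| ≤ 2 ^ K * r) :
    HasAtomicDecomp lam f (2 * D₁ * (mlam lam (Ilam x₁ r)).toReal +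
      2 * D₂ * (mlam lam (Ilam x₂ r)).toReal + D₁ * (mlam lam (Ilam x₁ r)).toReal *
        (2 * K * (mlamDoublingConst lam + 1) +
          (mlamDoublingConst lam + mlamDoublingConst lam ^ 2))) := by
  have hdisj := disjoint_Ilam hsep
  have hsplit := eq_indicator_add_indicator_of_abs_le hdisj hbound
  have hb₁ := abs_indicator_le_of_abs_le hdisj hD₁.le hbound
  have hb₂ := abs_indicator_le_of_abs_le hdisj.symm hD₂.le
    fun x => (hbound x).trans_eq (add_comm _ _)
  have hsupp₁ : ∀ y ∉ Ilam x₁ r, (Ilam x₁ r).indicator f y = 0 :=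
    fun _ hy => indicator_of_notMem hy f
  have hsupp₂ : ∀ y ∉ Ilam x₂ r, (Ilam x₂ r).indicator f y = 0 :=
    fun _ hy => indicator_of_notMem hy f
  set s := ∫ x, (Ilam x₁ r).indicator f x ∂mlam lam
  have hint₂ : ∫ x, (Ilam x₂ r).indicator f x ∂mlam lam = -s := by
    rw [eq_neg_iff_add_eq_zero, add_comm, ← integral_add
      (integrable_of_abs_le_of_support_subset (hf.indicator (measurableSet_Ilam x₁ r))
        (mlam_Ilam_ne_top hlam hx₁ hr.le) hsupp₁ hb₁)
      (integrable_of_abs_le_of_support_subset (hf.indicator (measurableSet_Ilam x₂ r))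
        (mlam_Ilam_ne_top hlam hx₂ hr.le) hsupp₂ hb₂), ← hint]
    exact integral_congr_ae (.of_forall fun x => (hsplit x).symm)
  have hs : |s| ≤ D₁ * (mlam lam (Ilam x₁ r)).toReal :=
    abs_integral_le_of_support_subset (mlam_Ilam_ne_top hlam hx₁ hr.le) hsupp₁ hb₁
  have h₁ := hasAtomicDecomp_sub_integral_mul_normalizedIndicator hlam hx₁ hr hD₁
    (hf.indicator (measurableSet_Ilam x₁ r)) hsupp₁ hb₁
  have h₂ := hasAtomicDecomp_sub_integral_mul_normalizedIndicator hlam hx₂ hr hD₂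
    (hf.indicator (measurableSet_Ilam x₂ r)) hsupp₂ hb₂
  have h₃ := (hasAtomicDecomp_normalizedIndicator_Ilam_sub_of_abs_le_pow_mul hlam hx₁ hx₂ hr
    hK).const_mul s
  refine ((h₁.add h₂).add h₃).congr (.of_forall fun y => ?_) |>.mono ?_
  · simp only [Pi.add_apply, Pi.sub_apply, hint₂]
    rw [hsplit y]
    ring
  · gcongr
    unfold mlamDoublingConst
    positivity

lemma exists_nat_le_two_pow_and_le_two_mul_logb {t : ℝ} (ht : 2 ≤ t) :
    ∃ K : ℕ, t ≤ 2 ^ K ∧ (K : ℝ) ≤ 2 * logb 2 t := by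
  have hL : 1 ≤ logb 2 t := (le_logb_iff_rpow_le one_lt_two (by linarith)).2 (by simpa using ht)
  refine ⟨⌈logb 2 t⌉₊, ?_, ?_⟩
  · rw [← rpow_natCast, ← logb_le_iff_le_rpow one_lt_two (by linarith)]
    exact Nat.le_ceil _
  · linarith [Nat.ceil_lt_add_one (by linarith : 0 ≤ logb 2 t)]

/-- Atomic decomposition of a function bounded by two bumps with cancellation:
if `∫ f dm_λ = 0`, `|f| ≤ D₁ 1_{I(x₁,r)} + D₂ 1_{I(x₂,r)}` and `|x₁-x₂| ≥ 4r`, then `f`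
decomposes into finitely many `(1,∞)_{Δ_λ}`-atoms with coefficient sum controlled by
`C log₂(|x₁-x₂|/r) (D₁ m_λ(I(x₁,r)) + D₂ m_λ(I(x₂,r)))`. -/
theorem atomic_decomposition_two_bumps (lam : ℝ) (hlam : 0 < lam) :
    ∃ C : ℝ, 0 < C ∧
      ∀ (f : ℝ → ℝ) (x₁ x₂ r D₁ D₂ : ℝ), Measurable f →
        0 < x₁ → 0 < x₂ → 0 < r → 0 < D₁ → 0 < D₂ →
        (∫ x, f x ∂(mlam lam)) = 0 →
        (∀ x : ℝ, |f x| ≤ D₁ * (Ilam x₁ r).indicator 1 x + D₂ * (Ilam x₂ r).indicator 1 x) →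
        4 * r ≤ |x₁ - x₂| →
        ∃ (N : ℕ) (α : ℕ → ℝ) (a : ℕ → ℝ → ℝ),
          (∀ j < N, IsDeltaAtom lam (a j)) ∧
          (∀ᵐ x ∂(mlam lam), f x = ∑ j ∈ Finset.range N, α j * a j x) ∧
          ∑ j ∈ Finset.range N, |α j| ≤
            C * Real.logb 2 (|x₁ - x₂| / r) *
              (D₁ * (mlam lam (Ilam x₁ r)).toReal + D₂ * (mlam lam (Ilam x₂ r)).toReal) := by
  have hQ := one_le_mlamDoublingConst hlam.le
  refine ⟨(mlamDoublingConst lam + 3) ^ 2, by positivity, ?_⟩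
  intro f x₁ x₂ r D₁ D₂ hf hx₁ hx₂ hr hD₁ hD₂ hint hbound hsep
  have hratio : 2 ≤ |x₁ - x₂| / r := (le_div_iff₀ hr).2 (by linarith)
  obtain ⟨K, hK, hKL⟩ := exists_nat_le_two_pow_and_le_two_mul_logb hratio
  have hL : 1 ≤ logb 2 (|x₁ - x₂| / r) :=
    (le_logb_iff_rpow_le one_lt_two (by linarith)).2 (by simpa using hratio)
  refine ((hasAtomicDecomp_of_abs_le_two_bumps hlam.le hf hx₁.le hx₂.le hr hD₁ hD₂ hint hbound
    (by linarith) ((div_le_iff₀ hr).1 hK)).mono ?_).exists_sum_range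
  have hE₁ := mul_pos hD₁ (mlam_Ilam_toReal_pos hlam.le hx₁.le hr)
  have hE₂ := mul_pos hD₂ (mlam_Ilam_toReal_pos hlam.le hx₂.le hr)
  set Q := mlamDoublingConst lam
  set L := logb 2 (|x₁ - x₂| / r)
  have h₁ : 2 + 2 * K * (Q + 1) + (Q + Q ^ 2) ≤ (Q + 3) ^ 2 * L := by nlinarith
  have h₂ : 2 ≤ (Q + 3) ^ 2 * L := by nlinarith
  calc _ = D₁ * (mlam lam (Ilam x₁ r)).toReal * (2 + 2 * K * (Q + 1) + (Q + Q ^ 2)) +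
        D₂ * (mlam lam (Ilam x₂ r)).toReal * 2 := by ring
    _ ≤ D₁ * (mlam lam (Ilam x₁ r)).toReal * ((Q + 3) ^ 2 * L) +
        D₂ * (mlam lam (Ilam x₂ r)).toReal * ((Q + 3) ^ 2 * L) := by gcongr
    _ = _ := by ring
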